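/- Let C(x) = (1-√(1-4x))/(2x) be the Catalan generating function. Then substituting b_1x³/(1-b_0x)² for x in C(x)^m and multiplying by 1/(1-b_0x)^m yields g(x)^m where g(x) = (1 - b_0x - √((1-b_0x)² - 4b_1x³))/(2b_1x³); i.e., (1/(1-b_0x)^m)·C(b_1x³/(1-b_0x)²)^m = g(x)^m. -/

import Mathlib

/-! Both sides of the identity solve `b₁ x³ y² - (1 - b₀ x) y + 1 = 0`: substituting
`a = b₁ x³ / (1 - b₀ x)²` into `x C² - C + 1 = 0` gives `a S² - S + 1 = 0` for `S = C(a)`,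
and dividing `S` by `1 - b₀ x` turns this into the equation of `g`. A quadratic
`p y² - u y + c = 0` with `p(0) = 0` and `u(0) ≠ 0` has at most one power series root, because
the difference of two roots `y, z` is killed by `p (y + z) - u`, which is nonzero at `0`. -/

open PowerSeries

/-- Substitution of the power series `g` (with zero constant term) into `f`. -/
noncomputable def pscomp (f g : PowerSeries ℚ) : PowerSeries ℚ :=
  PowerSeries.mk fun N => ∑ n ∈ Finset.range (N + 1), coeff n f * coeff N (g ^ n)

theorem coeff_pow_eq_zero_of_lt {R : Type*} [CommRing R] {a : R⟦X⟧} (ha : constantCoeff a = 0)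
    {N n : ℕ} (h : N < n) : coeff N (a ^ n) = 0 :=
  coeff_of_lt_order N <| (Nat.cast_lt.mpr h).trans_le (le_order_pow_of_constantCoeff_eq_zero n ha)

theorem pscomp_eq_subst {a : ℚ⟦X⟧} (ha : constantCoeff a = 0) (f : ℚ⟦X⟧) :
    pscomp f a = f.subst a := by
  ext N
  rw [coeff_subst' (HasSubst.of_constantCoeff_zero' ha),
    finsum_eq_finsetSum_of_support_subset (s := Finset.range (N + 1))]
  · simp [pscomp, smul_eq_mul]
  · intro d hd
    by_contra hdN
    simp only [Finset.coe_range, Set.mem_Iio, not_lt] at hdN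
    exact hd (by simp only [coeff_pow_eq_zero_of_lt ha (show N < d by omega), smul_zero])

theorem catalan_equation_subst {Cat a : ℚ⟦X⟧} (ha : constantCoeff a = 0)
    (hC : X * Cat ^ 2 - Cat + 1 = 0) :
    a * Cat.subst a ^ 2 - Cat.subst a + 1 = 0 := by
  have hsubst := congrArg (substAlgHom (R := ℚ) (HasSubst.of_constantCoeff_zero' ha)) hC
  simpa only [map_add, map_sub, map_mul, map_pow, map_one, map_zero, substAlgHom_X,
    coe_substAlgHom] using hsubst

theorem eq_of_quadratic_eq_zero {R : Type*} [CommRing R] [IsDomain R] {p u c y z : R⟦X⟧}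
    (hp : constantCoeff p = 0) (hu : constantCoeff u ≠ 0)
    (hy : p * y ^ 2 - u * y + c = 0) (hz : p * z ^ 2 - u * z + c = 0) : y = z := by
  have hfactor : (y - z) * (p * (y + z) - u) = 0 := by linear_combination hy - hz
  have hne : p * (y + z) - u ≠ 0 := fun h0 => hu <| by
    simpa [hp] using congrArg constantCoeff h0
  exact sub_eq_zero.mp ((mul_eq_zero.mp hfactor).resolve_right hne)

theorem stmt_13_general (b₀ b₁ : ℚ) (Cat g : PowerSeries ℚ)
    (hC : X * Cat ^ 2 - Cat + 1 = 0)
    (hg : C b₁ * X ^ 3 * g ^ 2 - (1 - C b₀ * X) * g + 1 = 0)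
    (m : ℕ) :
    ((1 - C b₀ * X)⁻¹) ^ m *
      (pscomp Cat (C b₁ * X ^ 3 * ((1 - C b₀ * X)⁻¹) ^ 2)) ^ m = g ^ m := by
  set u : ℚ⟦X⟧ := 1 - C b₀ * X
  set a : ℚ⟦X⟧ := C b₁ * X ^ 3 * (u⁻¹) ^ 2
  have ha : constantCoeff a = 0 := by simp [a]
  have hu : constantCoeff u = 1 := by simp [u]
  have hS := catalan_equation_subst ha hC
  have hu_inv : u * u⁻¹ = 1 := PowerSeries.mul_inv_cancel u (by simp [hu])
  have hsol : C b₁ * X ^ 3 * (u⁻¹ * Cat.subst a) ^ 2 - u * (u⁻¹ * Cat.subst a) + 1 = 0 := by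
    linear_combination hS - Cat.subst a * hu_inv
  rw [← mul_pow, pscomp_eq_subst ha, eq_of_quadratic_eq_zero (by simp) (by simp [hu]) hsol hg]

theorem stmt_13 (b₀ b₁ : ℚ) (Cat g : PowerSeries ℚ)
    (hC0 : constantCoeff Cat = 1) (hC : X * Cat ^ 2 - Cat + 1 = 0)
    (hg0 : constantCoeff g = 1)
    (hg : C b₁ * X ^ 3 * g ^ 2 - (1 - C b₀ * X) * g + 1 = 0)
    (m : ℕ) (hm : 1 ≤ m) :
    ((1 - C b₀ * X)⁻¹) ^ m *
      (pscomp Cat (C b₁ * X ^ 3 * ((1 - C b₀ * X)⁻¹) ^ 2)) ^ m = g ^ m :=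
  stmt_13_general b₀ b₁ Cat g hC hg m
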